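/- arXiv:2507.11319 — 2 statements merged into one kernel-verified Lean document; each statement's English description precedes it below -/
import Mathlib

section
/- Let D : [0,∞) → ℝ be continuous with D ≥ ε > 0, A(x) = ∫₀ˣ D, T_ℓ ≥ 0, and W : [0,∞) → ℝ continuous. Suppose T⋆ ≥ 0 satisfies A(T⋆) = A(T_ℓ) + W(T⋆) with W(T⋆) ≥ 0. Then the function T(u) = A⁻¹(A(T_ℓ) + W(T⋆)·u), u ∈ [0,1], is a mild solution of the boundary value problem: T ∈ C¹([0,1]), T(0) = T_ℓ, T(1) = T⋆, and T(u) = T_ℓ + W(T⋆)∫₀ᵘ dv/D(T(v)) for all u. -/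
open Real MeasureTheory Set intervalIntegral Filter

/-!
Extend `D` to all of `ℝ` by `E y = D (max y 0)`, so that `A(x) = ∫₀ˣ E` is C¹ with `A' = E ≥ ε`.
Then `A - ε·id` is monotone, so `A` is a strictly monotone surjection of `ℝ`, an order
isomorphism whose inverse has derivative `1 / E(A⁻¹ y)`. Hence `T u = A⁻¹(A(T_ℓ) + W(T⋆) u)`
has the continuous derivative `W(T⋆) / E(T)`, and the integral equation is the fundamental
theorem of calculus for `T`. As `T ≥ T_ℓ ≥ 0` on `[0, 1]`, `E` agrees with `D` along `T`.
-/

lemma surjective_of_hasDerivAt_ge {f f' : ℝ → ℝ} {ε : ℝ} (hf : ∀ x, HasDerivAt f (f' x) x)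
    (hε : 0 < ε) (hf' : ∀ x, ε ≤ f' x) : Function.Surjective f := by
  have hmono : Monotone fun x => f x - ε * x :=
    monotone_of_hasDerivAt_nonneg
      (fun x => ((hf x).sub ((hasDerivAt_id' x).const_mul ε)).congr_deriv (by ring))
      fun x => sub_nonneg.2 (hf' x)
  have hcont : Continuous f := continuous_iff_continuousAt.2 fun x => (hf x).continuousAt
  refine hcont.surjective ?_ ?_
  · refine tendsto_atTop_mono' _ ?_
      ((tendsto_id.const_mul_atTop hε).atTop_add (tendsto_const_nhds (x := f 0)))
    filter_upwards [eventually_ge_atTop 0] with x hx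
    have := hmono hx
    simp only [id, mul_zero, sub_zero] at this ⊢
    linarith
  · refine tendsto_atBot_mono' _ ?_
      ((tendsto_id.const_mul_atBot hε).atBot_add (tendsto_const_nhds (x := f 0)))
    filter_upwards [eventually_le_atBot 0] with x hx
    have := hmono hx
    simp only [id, mul_zero, sub_zero] at this ⊢
    linarith

lemma integral_comp_max_zero {F : Type*} [NormedAddCommGroup F] [NormedSpace ℝ F] (f : ℝ → F)
    {x : ℝ} (hx : 0 ≤ x) : ∫ t in (0:ℝ)..x, f (max t 0) = ∫ t in (0:ℝ)..x, f t :=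
  integral_congr fun t ht => by
    rw [uIcc_of_le hx] at ht
    rw [max_eq_left ht.1]

section Primitive

variable {E : ℝ → ℝ} {ε : ℝ}

lemma hasDerivAt_primitive (hE : Continuous E) (x : ℝ) :
    HasDerivAt (fun x => ∫ t in (0:ℝ)..x, E t) (E x) x :=
  (hE.integral_hasStrictDerivAt 0 x).hasDerivAt

noncomputable def primitiveOrderIso (hE : Continuous E) (hε : 0 < ε) (hEε : ∀ y, ε ≤ E y) :
    ℝ ≃o ℝ :=
  StrictMono.orderIsoOfSurjective _
    (strictMono_of_hasDerivAt_pos (hasDerivAt_primitive hE) fun x => hε.trans_le (hEε x))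
    (surjective_of_hasDerivAt_ge (hasDerivAt_primitive hE) hε hEε)

variable (hE : Continuous E) (hε : 0 < ε) (hEε : ∀ y, ε ≤ E y)

lemma hasDerivAt_primitiveOrderIso_symm (y : ℝ) :
    HasDerivAt (primitiveOrderIso hE hε hEε).symm
      (E ((primitiveOrderIso hE hε hEε).symm y))⁻¹ y :=
  .of_local_left_inverse (primitiveOrderIso hE hε hEε).symm.continuous.continuousAt
    (hasDerivAt_primitive hE _) (hε.trans_le (hEε _)).ne'
    (Eventually.of_forall (primitiveOrderIso hE hε hEε).apply_symm_apply)

noncomputable def primitiveProfile (c w : ℝ) (u : ℝ) : ℝ :=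
  (primitiveOrderIso hE hε hEε).symm (c + w * u)

lemma primitiveProfile_eq_iff (c w u x : ℝ) :
    primitiveProfile hE hε hEε c w u = x ↔ ∫ t in (0:ℝ)..x, E t = c + w * u :=
  (primitiveOrderIso hE hε hEε).symm_apply_eq.trans eq_comm

lemma le_primitiveProfile_iff (c w u x : ℝ) :
    x ≤ primitiveProfile hE hε hEε c w u ↔ ∫ t in (0:ℝ)..x, E t ≤ c + w * u :=
  (primitiveOrderIso hE hε hEε).le_symm_apply

lemma hasDerivAt_primitiveProfile (c w u : ℝ) :
    HasDerivAt (primitiveProfile hE hε hEε c w)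
      (w * (E (primitiveProfile hE hε hEε c w u))⁻¹) u := by
  have hlin : HasDerivAt (fun u : ℝ => c + w * u) w u := by
    simpa using ((hasDerivAt_id u).const_mul w).const_add c
  have h := (hasDerivAt_primitiveOrderIso_symm hE hε hEε _).comp u hlin
  rwa [mul_comm] at h

lemma continuous_inv_comp_primitiveProfile (c w : ℝ) :
    Continuous fun u => (E (primitiveProfile hE hε hEε c w u))⁻¹ :=
  (hE.comp (continuous_iff_continuousAt.2 fun u =>
    (hasDerivAt_primitiveProfile hE hε hEε c w u).continuousAt)).inv₀
    fun _ => (hε.trans_le (hEε _)).ne'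

lemma contDiff_primitiveProfile (c w : ℝ) : ContDiff ℝ 1 (primitiveProfile hE hε hEε c w) := by
  rw [contDiff_one_iff_deriv]
  refine ⟨fun u => (hasDerivAt_primitiveProfile hE hε hEε c w u).differentiableAt, ?_⟩
  rw [funext fun u => (hasDerivAt_primitiveProfile hE hε hEε c w u).deriv]
  exact continuous_const.mul (continuous_inv_comp_primitiveProfile hE hε hEε c w)

lemma primitiveProfile_eq_add_integral (c w u : ℝ) :
    primitiveProfile hE hε hEε c w u = primitiveProfile hE hε hEε c w 0 +
      w * ∫ v in (0:ℝ)..u, (E (primitiveProfile hE hε hEε c w v))⁻¹ := by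
  rw [← intervalIntegral.integral_const_mul,
    integral_eq_sub_of_hasDerivAt (fun v _ => hasDerivAt_primitiveProfile hE hε hEε c w v)
      ((continuous_const.mul
        (continuous_inv_comp_primitiveProfile hE hε hEε c w)).intervalIntegrable _ _)]
  ring

end Primitive

theorem stmt4_general (D W : ℝ → ℝ) (ε Tl Tstar : ℝ)
    (hε : 0 < ε) (hD : ContinuousOn D (Ici 0)) (hDε : ∀ y ≥ (0:ℝ), ε ≤ D y)
    (hTl : 0 ≤ Tl) (hTstar : 0 ≤ Tstar)
    (hWpos : 0 ≤ W Tstar)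
    (hroot : (∫ y in (0:ℝ)..Tstar, D y) = (∫ y in (0:ℝ)..Tl, D y) + W Tstar) :
    ∃ T : ℝ → ℝ,
      (∀ u ∈ Icc (0:ℝ) 1, 0 ≤ T u ∧
        (∫ y in (0:ℝ)..(T u), D y) = (∫ y in (0:ℝ)..Tl, D y) + W Tstar * u) ∧
      ContDiffOn ℝ 1 T (Icc 0 1) ∧ T 0 = Tl ∧ T 1 = Tstar ∧
      ∀ u ∈ Icc (0:ℝ) 1, T u = Tl + W Tstar * ∫ v in (0:ℝ)..u, 1 / D (T v) := by
  set E : ℝ → ℝ := fun y => D (max y 0)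
  have hE : Continuous E :=
    hD.comp_continuous (continuous_id.max continuous_const) fun y => le_max_right y 0
  have hEε : ∀ y, ε ≤ E y := fun y => hDε _ (le_max_right y 0)
  set T := primitiveProfile hE hε hEε (∫ y in (0:ℝ)..Tl, D y) (W Tstar)
  have hT_eq : ∀ u x, 0 ≤ x →
      (T u = x ↔ ∫ y in (0:ℝ)..x, D y = (∫ y in (0:ℝ)..Tl, D y) + W Tstar * u) :=
    fun u x hx => by rw [primitiveProfile_eq_iff, integral_comp_max_zero D hx]
  have hT0 : T 0 = Tl := (hT_eq 0 Tl hTl).2 (by rw [mul_zero, add_zero])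
  have hT_nonneg : ∀ u, 0 ≤ u → 0 ≤ T u := fun u hu =>
    hTl.trans <| (le_primitiveProfile_iff hE hε hEε _ _ _ _).2 <| by
      rw [integral_comp_max_zero D hTl]
      exact le_add_of_nonneg_right (mul_nonneg hWpos hu)
  refine ⟨T, fun u hu => ⟨hT_nonneg u hu.1, (hT_eq u _ (hT_nonneg u hu.1)).1 rfl⟩,
    (contDiff_primitiveProfile hE hε hEε _ _).contDiffOn, hT0,
    (hT_eq 1 Tstar hTstar).2 (by rw [hroot, mul_one]), fun u hu => ?_⟩
  have hT_int : T u = T 0 + W Tstar * ∫ v in (0:ℝ)..u, (E (T v))⁻¹ :=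
    primitiveProfile_eq_add_integral hE hε hEε _ _ u
  rw [hT_int, hT0]
  congr 2
  refine integral_congr fun v hv => ?_
  rw [uIcc_of_le hu.1] at hv
  simp only [E, max_eq_left (hT_nonneg v hv.1), one_div]

theorem stmt4 (D W : ℝ → ℝ) (ε Tl Tstar : ℝ)
    (hε : 0 < ε) (hD : ContinuousOn D (Ici 0)) (hDε : ∀ y ≥ (0:ℝ), ε ≤ D y)
    (hTl : 0 ≤ Tl) (hWc : ContinuousOn W (Ici 0)) (hTstar : 0 ≤ Tstar)
    (hWpos : 0 ≤ W Tstar)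
    (hroot : (∫ y in (0:ℝ)..Tstar, D y) = (∫ y in (0:ℝ)..Tl, D y) + W Tstar) :
    ∃ T : ℝ → ℝ,
      (∀ u ∈ Icc (0:ℝ) 1, 0 ≤ T u ∧
        (∫ y in (0:ℝ)..(T u), D y) = (∫ y in (0:ℝ)..Tl, D y) + W Tstar * u) ∧
      ContDiffOn ℝ 1 T (Icc 0 1) ∧ T 0 = Tl ∧ T 1 = Tstar ∧
      ∀ u ∈ Icc (0:ℝ) 1, T u = Tl + W Tstar * ∫ v in (0:ℝ)..u, 1 / D (T v) :=
  stmt4_general D W ε Tl Tstar hε hD hDε hTl hTstar hWpos hroot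
end

section
/- Let D : [0,∞) → ℝ be continuous with D ≥ ε > 0, A(x) = ∫₀ˣ D, and fix T_ℓ ≥ 0 and W : [0,∞) → [0,∞) continuous. The map T ↦ T(1) is a bijection between the set of mild solutions of the boundary value problem and the set of solutions T⋆ ≥ 0 of the scalar equation A(T⋆) = A(T_ℓ) + W(T⋆). In particular, if the function T ↦ A(T) − W(T) is strictly monotone, the boundary value problem has at most one mild solution. -/
open MeasureTheory Set intervalIntegral Filter

/-!
Along a mild solution `T` with `W(T 1) = c`, the chain rule gives `(A ∘ T)' = D(T) · c / D(T) = c`,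
so `A (T u) = A T_ℓ + c u`; at `u = 1` this is the scalar equation, and since `A` is strictly
increasing it determines `T` from `T 1`. Conversely `T u := A⁻¹ (A T_ℓ + W(T⋆) u)` is a mild
solution. `D` is only given on `[0, ∞)`; replacing it by `y ↦ D (max y 0)` changes neither `A`
on `[0, ∞)` nor the notion of mild solution, and makes `A` a global `C¹` order isomorphism of `ℝ`.
-/

noncomputable def primitive (D : ℝ → ℝ) (x : ℝ) : ℝ := ∫ y in (0:ℝ)..x, D y

def IsMild (D W : ℝ → ℝ) (Tl : ℝ) (T : ℝ → ℝ) : Prop :=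
  ContDiffOn ℝ 1 T (Icc 0 1) ∧ (∀ u ∈ Icc (0:ℝ) 1, 0 ≤ T u) ∧
    ∀ u ∈ Icc (0:ℝ) 1, T u = Tl + W (T 1) * ∫ v in (0:ℝ)..u, 1 / D (T v)

theorem hasDerivAt_of_eqOn_add_integral {f g : ℝ → ℝ} {a b x₀ x : ℝ}
    (hg : ContinuousOn g (Icc a b)) (hf : ∀ u ∈ Icc a b, f u = x₀ + ∫ v in a..u, g v)
    (hx : x ∈ Ioo a b) : HasDerivAt f (g x) x := by
  have hint : IntervalIntegrable g volume a x :=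
    (hg.mono (Icc_subset_Icc_right hx.2.le)).intervalIntegrable_of_Icc hx.1.le
  have hderiv := (integral_hasDerivAt_right hint
    ((hg.mono Ioo_subset_Icc_self).stronglyMeasurableAtFilter isOpen_Ioo x hx)
    (hg.continuousAt (Icc_mem_nhds hx.1 hx.2))).const_add x₀
  exact hderiv.congr_of_eventuallyEq
    (eventually_of_mem (Icc_mem_nhds hx.1 hx.2) hf)

section Primitive

variable {D : ℝ → ℝ}

theorem hasDerivAt_primitive_s6 (hD : Continuous D) (x : ℝ) : HasDerivAt (primitive D) (D x) x :=
  (hD.integral_hasStrictDerivAt 0 x).hasDerivAt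

theorem differentiable_primitive (hD : Continuous D) : Differentiable ℝ (primitive D) :=
  fun x => (hasDerivAt_primitive_s6 hD x).differentiableAt

theorem primitive_eqOn_of_eqOn {D' : ℝ → ℝ} (h : EqOn D D' (Ici 0)) :
    EqOn (primitive D) (primitive D') (Ici 0) := fun x hx =>
  integral_congr fun y hy => h (by rw [uIcc_of_le (mem_Ici.mp hx)] at hy; exact hy.1)

theorem strictMono_primitive (hD : Continuous D) (hpos : ∀ y, 0 < D y) :
    StrictMono (primitive D) :=
  strictMono_of_hasDerivAt_pos (hasDerivAt_primitive_s6 hD) hpos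

theorem mul_sub_le_primitive_sub {ε x y : ℝ} (hD : Continuous D) (hDε : ∀ y, ε ≤ D y)
    (hxy : x ≤ y) : ε * (y - x) ≤ primitive D y - primitive D x := by
  rw [primitive, primitive, integral_interval_sub_left (hD.intervalIntegrable _ _)
    (hD.intervalIntegrable _ _)]
  have := integral_mono_on (μ := volume) (f := fun _ => ε) hxy intervalIntegrable_const
    (hD.intervalIntegrable x y) fun z _ => hDε z
  rwa [intervalIntegral.integral_const, smul_eq_mul, mul_comm] at this

theorem surjective_primitive {ε : ℝ} (hD : Continuous D) (hε : 0 < ε) (hDε : ∀ y, ε ≤ D y) :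
    Function.Surjective (primitive D) := by
  have h0 : primitive D 0 = 0 := integral_same
  refine (differentiable_primitive hD).continuous.surjective ?_ ?_
  · refine tendsto_atTop_mono' atTop ?_ (tendsto_id.const_mul_atTop hε)
    filter_upwards [eventually_ge_atTop 0] with y hy
    simpa [h0] using mul_sub_le_primitive_sub hD hDε hy
  · refine tendsto_atBot_mono' atBot ?_ (tendsto_id.const_mul_atBot hε)
    filter_upwards [eventually_le_atBot 0] with x hx
    simpa [h0] using mul_sub_le_primitive_sub hD hDε hx

theorem exists_primitive_comp_eq_affine {ε : ℝ} (hD : Continuous D) (hε : 0 < ε)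
    (hDε : ∀ y, ε ≤ D y) (a c : ℝ) :
    ∃ T : ℝ → ℝ, ∀ u, primitive D (T u) = a + c * u ∧ HasDerivAt T (c / D (T u)) u := by
  have hpos : ∀ y, 0 < D y := fun y => hε.trans_le (hDε y)
  set e := StrictMono.orderIsoOfSurjective _ (strictMono_primitive hD hpos)
    (surjective_primitive hD hε hDε)
  have he : ∀ y, primitive D (e.symm y) = y := e.apply_symm_apply
  refine ⟨fun u => e.symm (a + c * u), fun u => ⟨he _, ?_⟩⟩
  have hinv := HasDerivAt.of_local_left_inverse (a := a + c * u) e.symm.continuous.continuousAt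
    (hasDerivAt_primitive_s6 hD _) (hpos _).ne' (Eventually.of_forall he)
  have hlin : HasDerivAt (fun u => a + c * u) c u := by
    simpa using ((hasDerivAt_id u).const_mul c).const_add a
  rw [div_eq_inv_mul]
  exact hinv.comp u hlin

end Primitive

namespace IsMild

variable {D W : ℝ → ℝ} {Tl : ℝ} {T : ℝ → ℝ}

theorem congr_left {D' : ℝ → ℝ} (h : EqOn D D' (Ici 0)) (hT : IsMild D W Tl T) :
    IsMild D' W Tl T := by
  obtain ⟨hC1, hnonneg, heq⟩ := hT
  refine ⟨hC1, hnonneg, fun u hu => ?_⟩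
  rw [heq u hu]
  congr 2
  refine integral_congr fun v hv => ?_
  rw [uIcc_of_le hu.1] at hv
  simp only [h (hnonneg v ⟨hv.1, hv.2.trans hu.2⟩)]

theorem apply_zero (hT : IsMild D W Tl T) : T 0 = Tl := by
  simpa using hT.2.2 0 ⟨le_rfl, zero_le_one⟩

theorem primitive_apply (hD : Continuous D) (hpos : ∀ y, 0 < D y) (hT : IsMild D W Tl T)
    {u : ℝ} (hu : u ∈ Icc (0:ℝ) 1) : primitive D (T u) = primitive D Tl + W (T 1) * u := by
  have hT0 : T 0 = Tl := hT.apply_zero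
  obtain ⟨hC1, -, heq⟩ := hT
  set c := W (T 1)
  have hcont : ContinuousOn (fun v => c * (1 / D (T v))) (Icc 0 1) :=
    continuousOn_const.mul (continuousOn_const.div (hD.comp_continuousOn hC1.continuousOn)
      fun v _ => (hpos _).ne')
  have hderiv : ∀ x ∈ Ioo (0:ℝ) 1, HasDerivAt T (c * (1 / D (T x))) x := fun x hx =>
    hasDerivAt_of_eqOn_add_integral hcont
      (fun v hv => by rw [heq v hv, intervalIntegral.integral_const_mul]) hx
  -- the chain rule cancels `D (T x)`
  have hftc := integral_eq_sub_of_hasDerivAt_of_le (f' := fun _ => c) hu.1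
    ((differentiable_primitive hD).continuous.comp_continuousOn
      (hC1.continuousOn.mono (Icc_subset_Icc_right hu.2)))
    (fun x hx => by
      have := (hasDerivAt_primitive_s6 hD (T x)).comp x (hderiv x ⟨hx.1, hx.2.trans_le hu.2⟩)
      rwa [mul_one_div, mul_div_cancel₀ _ (hpos _).ne'] at this)
    intervalIntegrable_const
  simp only [intervalIntegral.integral_const, smul_eq_mul, sub_zero, Function.comp_apply,
    hT0] at hftc
  linarith

theorem eqOn_of_apply_one_eq (hD : Continuous D) (hpos : ∀ y, 0 < D y) {T' : ℝ → ℝ}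
    (hT : IsMild D W Tl T) (hT' : IsMild D W Tl T') (h1 : T 1 = T' 1) :
    EqOn T T' (Icc 0 1) := fun u hu =>
  (strictMono_primitive hD hpos).injective <| by
    rw [hT.primitive_apply hD hpos hu, hT'.primitive_apply hD hpos hu, h1]

end IsMild

theorem exists_isMild_apply_one_eq {D W : ℝ → ℝ} {ε Tl Tstar : ℝ} (hD : Continuous D)
    (hε : 0 < ε) (hDε : ∀ y, ε ≤ D y) (hTl : 0 ≤ Tl) (hW : 0 ≤ W Tstar)
    (hroot : primitive D Tstar = primitive D Tl + W Tstar) :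
    ∃ T, IsMild D W Tl T ∧ T 1 = Tstar := by
  have hpos : ∀ y, 0 < D y := fun y => hε.trans_le (hDε y)
  have hmono := strictMono_primitive hD hpos
  obtain ⟨T, hT⟩ := exists_primitive_comp_eq_affine hD hε hDε (primitive D Tl) (W Tstar)
  have hT0 : T 0 = Tl := hmono.injective <| by simp [(hT 0).1]
  have hT1 : T 1 = Tstar := hmono.injective <| by simp [(hT 1).1, hroot]
  have hderiv_cont : Continuous fun u => W Tstar / D (T u) :=
    continuous_const.div (hD.comp (continuous_iff_continuousAt.2 fun u =>
      (hT u).2.continuousAt)) fun u => (hpos _).ne'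
  have hC1 : ContDiff ℝ 1 T := contDiff_one_iff_deriv.2
    ⟨fun u => (hT u).2.differentiableAt, by
      rwa [show deriv T = _ from funext fun u => (hT u).2.deriv]⟩
  refine ⟨T, ⟨hC1.contDiffOn, fun u hu => ?_, fun u _ => ?_⟩, hT1⟩
  · refine hmono.le_iff_le.1 ?_
    rw [(hT u).1]
    linarith [hmono.monotone hTl, mul_nonneg hW hu.1]
  · have hftc := integral_eq_sub_of_hasDerivAt (fun v _ => (hT v).2)
      (hderiv_cont.intervalIntegrable 0 u)
    rw [hT1, ← intervalIntegral.integral_const_mul]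
    simp only [mul_one_div]
    rw [hftc, hT0]
    ring

theorem stmt6_general (D W : ℝ → ℝ) (ε Tl : ℝ)
    (hε : 0 < ε) (hD : ContinuousOn D (Ici 0)) (hDε : ∀ y ≥ (0:ℝ), ε ≤ D y)
    (hTl : 0 ≤ Tl) (hWpos : ∀ T ≥ (0:ℝ), 0 ≤ W T) :
    let A : ℝ → ℝ := fun x => ∫ y in (0:ℝ)..x, D y
    let Mild : (ℝ → ℝ) → Prop := fun T =>
      ContDiffOn ℝ 1 T (Icc 0 1) ∧ (∀ u ∈ Icc (0:ℝ) 1, 0 ≤ T u) ∧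
      ∀ u ∈ Icc (0:ℝ) 1, T u = Tl + W (T 1) * ∫ v in (0:ℝ)..u, 1 / D (T v)
    (∀ T, Mild T → 0 ≤ T 1 ∧ A (T 1) = A Tl + W (T 1)) ∧
    (∀ Tstar ≥ (0:ℝ), A Tstar = A Tl + W Tstar → ∃ T, Mild T ∧ T 1 = Tstar) ∧
    (∀ T T', Mild T → Mild T' → T 1 = T' 1 → EqOn T T' (Icc 0 1)) ∧
    (StrictMonoOn (fun T => A T - W T) (Ici 0) →
      ∀ T T', Mild T → Mild T' → EqOn T T' (Icc 0 1)) := by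
  intro A Mild
  set D' : ℝ → ℝ := fun y => D (max y 0)
  have hDD' : EqOn D D' (Ici 0) := fun y hy => by simp [D', max_eq_left (mem_Ici.mp hy)]
  have hD' : Continuous D' :=
    hD.comp_continuous (continuous_id.max continuous_const) fun y => le_max_right y 0
  have hD'ε : ∀ y, ε ≤ D' y := fun y => hDε _ (le_max_right y 0)
  have hD'pos : ∀ y, 0 < D' y := fun y => hε.trans_le (hD'ε y)
  have hA : EqOn A (primitive D') (Ici 0) := primitive_eqOn_of_eqOn hDD'
  have hMild : ∀ T, Mild T → IsMild D' W Tl T := fun T => IsMild.congr_left hDD'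
  have hscalar : ∀ T, Mild T → 0 ≤ T 1 ∧ A (T 1) = A Tl + W (T 1) := fun T hT => by
    have h1 := hT.2.1 1 ⟨zero_le_one, le_rfl⟩
    refine ⟨h1, ?_⟩
    rw [hA h1, hA hTl, (hMild T hT).primitive_apply hD' hD'pos ⟨zero_le_one, le_rfl⟩, mul_one]
  have hunique : ∀ T T', Mild T → Mild T' → T 1 = T' 1 → EqOn T T' (Icc 0 1) :=
    fun T T' hT hT' => (hMild T hT).eqOn_of_apply_one_eq hD' hD'pos (hMild T' hT')
  refine ⟨hscalar, fun Tstar hTstar hA' => ?_, hunique, fun hmono T T' hT hT' => ?_⟩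
  · rw [hA hTstar, hA hTl] at hA'
    obtain ⟨T, hT, h1⟩ := exists_isMild_apply_one_eq hD' hε hD'ε hTl (hWpos _ hTstar) hA'
    exact ⟨T, hT.congr_left hDD'.symm, h1⟩
  · obtain ⟨h1, hA1⟩ := hscalar T hT
    obtain ⟨h1', hA1'⟩ := hscalar T' hT'
    exact hunique T T' hT hT' (hmono.injOn h1 h1' (by simp only [hA1, hA1']; ring))

theorem stmt6 (D W : ℝ → ℝ) (ε Tl : ℝ)
    (hε : 0 < ε) (hD : ContinuousOn D (Ici 0)) (hDε : ∀ y ≥ (0:ℝ), ε ≤ D y)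
    (hTl : 0 ≤ Tl) (hWc : ContinuousOn W (Ici 0)) (hWpos : ∀ T ≥ (0:ℝ), 0 ≤ W T) :
    let A : ℝ → ℝ := fun x => ∫ y in (0:ℝ)..x, D y
    let Mild : (ℝ → ℝ) → Prop := fun T =>
      ContDiffOn ℝ 1 T (Icc 0 1) ∧ (∀ u ∈ Icc (0:ℝ) 1, 0 ≤ T u) ∧
      ∀ u ∈ Icc (0:ℝ) 1, T u = Tl + W (T 1) * ∫ v in (0:ℝ)..u, 1 / D (T v)
    (∀ T, Mild T → 0 ≤ T 1 ∧ A (T 1) = A Tl + W (T 1)) ∧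
    (∀ Tstar ≥ (0:ℝ), A Tstar = A Tl + W Tstar → ∃ T, Mild T ∧ T 1 = Tstar) ∧
    (∀ T T', Mild T → Mild T' → T 1 = T' 1 → EqOn T T' (Icc 0 1)) ∧
    (StrictMonoOn (fun T => A T - W T) (Ici 0) →
      ∀ T T', Mild T → Mild T' → EqOn T T' (Icc 0 1)) :=
  stmt6_general D W ε Tl hε hD hDε hTl hWpos
end
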